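/- Each string in a sorted list appears in exactly one block of the stable merge, and the sequence of insertion points found by the adaptive algorithm is non-decreasing: if the algorithm processes blocks in order, then the pointer p_s into each list never decreases, and each list element is the head of a doubling search at most once. -/

import Mathlib

/-- The stable merge of two lists, tagging each element with the list (1 or 2) it
came from; ties are broken in favor of the first list. -/
def mergeTagged {α : Type*} [LinearOrder α] : List α → List α → List (α × ℕ)
  | [], B => B.map (·, 2)
  | a :: A, [] => (a, 1) :: mergeTagged A []
  | a :: A, b :: B =>
    if a ≤ b then (a, 1) :: mergeTagged A (b :: B)
    else (b, 2) :: mergeTagged (a :: A) B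
  termination_by A B => A.length + B.length

/-- The blocks emitted by the adaptive merging algorithm: it searches for the head
of the current list (with label `la`) in the other list (with label `lb`), emits
the elements of the other list preceding it as a block (ties broken in favor of
label 1), advances the pointer of the other list past the emitted block, and
switches sides.  Pointer advancement is encoded by recursing on the dropped
remainder, so the pointers into both lists never decrease and each element is the
head of a doubling search at most once. -/
def adaptiveBlocks {α : Type*} [LinearOrder α] :
    ℕ → List α × ℕ → List α × ℕ → List (List (α × ℕ))
  | 0, _, _ => []
  | fuel + 1, (A, la), (B, lb) =>
    match A with
    | [] => if B.isEmpty then [] else [B.map (·, lb)]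
    | x :: _ =>
      let blk := B.takeWhile (fun b => if lb < la then decide (b ≤ x) else decide (b < x))
      blk.map (·, lb) :: adaptiveBlocks fuel (B.drop blk.length, lb) (A, la)


section AdaptiveProof
variable {α : Type*} [LinearOrder α]

private lemma drop_len_takeWhile (p : α → Bool) (l : List α) :
    l.drop (l.takeWhile p).length = l.dropWhile p := by
  induction l with
  | nil => rfl
  | cons a l ih =>
    by_cases h : p a <;>
      simp [List.takeWhile_cons, List.dropWhile_cons, h, ih]

private lemma len_takeWhile_add (p : α → Bool) (l : List α) :
    (l.takeWhile p).length + (l.dropWhile p).length = l.length := by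
  rw [← List.length_append, List.takeWhile_append_dropWhile]

private lemma mergeTagged_nil_right (A : List α) :
    mergeTagged A [] = A.map (·, 1) := by
  induction A with
  | nil => simp [mergeTagged]
  | cons a A ih => rw [mergeTagged]; simp [ih]

private lemma peelB (x : α) (A B : List α) :
    mergeTagged (x :: A) B =
      (B.takeWhile (fun b => decide (b < x))).map (·, 2) ++
        mergeTagged (x :: A) (B.dropWhile (fun b => decide (b < x))) := by
  induction B with
  | nil => simp
  | cons b B ih =>
    by_cases h : b < x
    · rw [mergeTagged]
      simp [h, not_le.mpr h, ih]
    · simp [h, List.takeWhile_cons, List.dropWhile_cons]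

private lemma peelA (b : α) (A B : List α) :
    mergeTagged A (b :: B) =
      (A.takeWhile (fun a => decide (a ≤ b))).map (·, 1) ++
        mergeTagged (A.dropWhile (fun a => decide (a ≤ b))) (b :: B) := by
  induction A with
  | nil => simp
  | cons a A ih =>
    by_cases h : a ≤ b
    · rw [mergeTagged]
      simp [h, ih]
    · simp [h, List.takeWhile_cons, List.dropWhile_cons]

private lemma key : ∀ n fuel (A B : List α), A.length + B.length ≤ n →
    2 * (A.length + B.length) + 2 ≤ fuel →
    (adaptiveBlocks fuel (A, 1) (B, 2)).flatten = mergeTagged A B ∧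
    (adaptiveBlocks fuel (B, 2) (A, 1)).flatten = mergeTagged A B := by
  intro n
  induction n with
  | zero =>
    intro fuel A B hn hf
    obtain ⟨rfl, rfl⟩ : A = [] ∧ B = [] := by
      constructor <;> (apply List.eq_nil_of_length_eq_zero; omega)
    obtain ⟨f, rfl⟩ : ∃ f, fuel = f + 1 := ⟨fuel - 1, by omega⟩
    simp [adaptiveBlocks, mergeTagged]
  | succ n ih =>
    intro fuel A B hn hf
    obtain ⟨f, rfl⟩ : ∃ f, fuel = f + 1 := ⟨fuel - 1, by omega⟩
    constructor
    · match A with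
      | [] => cases B <;> simp [adaptiveBlocks, mergeTagged]
      | x :: A' =>
        simp only [adaptiveBlocks]
        norm_num
        rw [drop_len_takeWhile, peelB]
        congr 1
        by_cases hblk : (B.takeWhile (fun b => decide (b < x))) = []
        · have hBd : B.dropWhile (fun b => decide (b < x)) = B := by
            have h := List.takeWhile_append_dropWhile
              (p := fun b => decide (b < x)) (l := B)
            rw [hblk] at h
            simpa using h
          rw [hBd]
          match B with
          | [] =>
            obtain ⟨g, rfl⟩ : ∃ g, f = g + 1 := ⟨f - 1, by omega⟩
            simp [adaptiveBlocks, mergeTagged_nil_right]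
          | b :: B' =>
            have hxb : x ≤ b := by
              by_contra hc
              simp [List.takeWhile_cons, not_le.mp hc] at hblk
            obtain ⟨g, rfl⟩ : ∃ g, f = g + 1 := ⟨f - 1, by omega⟩
            simp only [adaptiveBlocks]
            norm_num
            rw [drop_len_takeWhile, peelA]
            congr 1
            have h1 : (x :: A').takeWhile (fun a => decide (a ≤ b)) ≠ [] := by
              simp [List.takeWhile_cons, hxb]
            have h2 := len_takeWhile_add (fun a => decide (a ≤ b)) (x :: A')
            have h3 : 1 ≤ ((x :: A').takeWhile (fun a => decide (a ≤ b))).length :=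
              List.length_pos_iff.mpr h1
            exact (ih g ((x :: A').dropWhile (fun a => decide (a ≤ b))) (b :: B')
              (by simp at hn h2 ⊢; omega) (by simp at hf h2 ⊢; omega)).1
        · have h2 := len_takeWhile_add (fun b => decide (b < x)) B
          have h3 : 1 ≤ (B.takeWhile (fun b => decide (b < x))).length :=
            List.length_pos_iff.mpr hblk
          exact (ih f (x :: A') (B.dropWhile (fun b => decide (b < x)))
            (by simp at hn ⊢; omega) (by simp at hf ⊢; omega)).2
    · match B with
      | [] => cases A <;> simp [adaptiveBlocks, mergeTagged_nil_right]
      | b :: B' =>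
        simp only [adaptiveBlocks]
        norm_num
        rw [drop_len_takeWhile, peelA]
        congr 1
        by_cases hblk : (A.takeWhile (fun a => decide (a ≤ b))) = []
        · have hAd : A.dropWhile (fun a => decide (a ≤ b)) = A := by
            have h := List.takeWhile_append_dropWhile
              (p := fun a => decide (a ≤ b)) (l := A)
            rw [hblk] at h
            simpa using h
          rw [hAd]
          match A with
          | [] =>
            obtain ⟨g, rfl⟩ : ∃ g, f = g + 1 := ⟨f - 1, by omega⟩
            simp [adaptiveBlocks, mergeTagged]
          | a :: A'' =>
            have hba : b < a := by
              by_contra hc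
              simp [List.takeWhile_cons, not_lt.mp hc] at hblk
            obtain ⟨g, rfl⟩ : ∃ g, f = g + 1 := ⟨f - 1, by omega⟩
            simp only [adaptiveBlocks]
            norm_num
            rw [drop_len_takeWhile, peelB]
            congr 1
            have h1 : (b :: B').takeWhile (fun t => decide (t < a)) ≠ [] := by
              simp [List.takeWhile_cons, hba]
            have h2 := len_takeWhile_add (fun t => decide (t < a)) (b :: B')
            have h3 : 1 ≤ ((b :: B').takeWhile (fun t => decide (t < a))).length :=
              List.length_pos_iff.mpr h1
            exact (ih g (a :: A'') ((b :: B').dropWhile (fun t => decide (t < a)))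
              (by simp at hn h2 ⊢; omega) (by simp at hf h2 ⊢; omega)).2
        · have h2 := len_takeWhile_add (fun a => decide (a ≤ b)) A
          have h3 : 1 ≤ (A.takeWhile (fun a => decide (a ≤ b))).length :=
            List.length_pos_iff.mpr hblk
          exact (ih f (A.dropWhile (fun a => decide (a ≤ b))) (b :: B')
            (by simp at hn ⊢; omega) (by simp at hf ⊢; omega)).1

private lemma mergeTagged_length : ∀ (A B : List α),
    (mergeTagged A B).length = A.length + B.length
  | [], B => by rw [mergeTagged]; simp
  | a :: A, [] => by rw [mergeTagged]; simp [mergeTagged_length A []]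
  | a :: A, b :: B => by
      rw [mergeTagged]
      split <;>
        simp [mergeTagged_length A (b :: B), mergeTagged_length (a :: A) B] <;> omega
  termination_by A B => A.length + B.length

private lemma blocks_label : ∀ fuel (A B : List α) (la lb : ℕ),
    ∀ blk ∈ adaptiveBlocks fuel (A, la) (B, lb), ∃ c, ∀ p ∈ blk, p.2 = c := by
  intro fuel
  induction fuel with
  | zero => intro A B la lb blk h; simp [adaptiveBlocks] at h
  | succ f ih =>
    intro A B la lb blk h
    match A with
    | [] =>
      simp only [adaptiveBlocks] at h
      split at h
      · simp at h
      · simp only [List.mem_singleton] at h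
        subst h
        refine ⟨lb, fun p hp => ?_⟩
        simp only [List.mem_map] at hp
        obtain ⟨y, -, rfl⟩ := hp
        rfl
    | x :: A' =>
      simp only [adaptiveBlocks, List.mem_cons] at h
      rcases h with rfl | h
      · refine ⟨lb, fun p hp => ?_⟩
        simp only [List.mem_map] at hp
        obtain ⟨y, -, rfl⟩ := hp
        rfl
      · exact ih _ _ _ _ _ h

end AdaptiveProof

/-- Correctness of the adaptive merging algorithm: for sorted lists `A` and `B`,
the concatenation of the emitted blocks is exactly the stable sorted merge of `A`
and `B`; each element of `A` and `B` appears in exactly one block (so the block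
lengths sum to `|A| + |B|`), and every block is drawn from a single source list. -/
theorem adaptiveBlocks_correct {α : Type*} [LinearOrder α] (A B : List α)
    (hA : A.Pairwise (· ≤ ·)) (hB : B.Pairwise (· ≤ ·)) :
    let blocks := adaptiveBlocks (2 * (A.length + B.length) + 2) (A, 1) (B, 2)
    blocks.flatten = mergeTagged A B ∧
    (blocks.map List.length).sum = A.length + B.length ∧
    (∀ p : α × ℕ, (blocks.map (List.count p)).sum = (mergeTagged A B).count p) ∧
    (∀ blk ∈ blocks, ∀ p ∈ blk, ∀ q ∈ blk, p.2 = q.2) := by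
  intro blocks
  have hkey := key (α := α) (A.length + B.length) (2 * (A.length + B.length) + 2)
    A B le_rfl le_rfl
  have h1 : blocks.flatten = mergeTagged A B := hkey.1
  refine ⟨h1, ?_, ?_, ?_⟩
  · rw [← List.length_flatten, h1, mergeTagged_length]
  · intro p
    rw [← List.count_flatten, h1]
  · intro blk hblk p hp q hq
    obtain ⟨c, hc⟩ := blocks_label _ A B 1 2 blk hblk
    rw [hc p hp, hc q hq]
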